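/- arXiv:2605.05582 — 3 statements merged into one kernel-verified Lean document; each statement's English description precedes it below -/
import Mathlib

section
/- Let n ≥ 1 and let Φ be a holomorphic map from the open upper half-plane {z ∈ ℂ : Im z > 0} to the n×n complex matrices such that for every z in the upper half-plane the matrix Φ(z) is symmetric (Φ(z)ᵀ = Φ(z)) and the matrix B(z) := (Φ(z) − Φ(z)*)/(2i) is positive definite. Then for every z = σ + iτ with τ > 0 one has |det(Φ'(z))| ≤ det(B(z)) / τⁿ, i.e. ‖det(Φ'(z))‖ · (Im z)ⁿ ≤ Re(det(B(z))). -/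
/-!
For `w` in the upper half-plane, the matrices `Φ w` and `Φ z` both have positive definite
imaginary part, and this forces `‖det (Φ w - Φ z)‖ ≤ ‖det (Φ w - (Φ z)ᴴ)‖`, the second
determinant being nonzero: with `Q = Im (Φ z)`, the matrices `X = Φ w - (Φ z)ᴴ` and
`Y = Φ w - Φ z` satisfy `Xᴴ Q⁻¹ X - Yᴴ Q⁻¹ Y = 4 Im (Φ w)`, so `Y X⁻¹` is a contraction for the
norm defined by `Q⁻¹`. Since `det (Φ w - Φ z)` vanishes to order `n` at `w = z`, the quotient
`det (Φ w - Φ z) / det (Φ w - (Φ z)ᴴ)` is `(w - z)ⁿ h(w)` with `h` holomorphic, and a Schwarz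
lemma of order `n` on the upper half-plane (transported from the unit disc) bounds
`|h z| = |det Φ'(z)| / |det (Φ z - (Φ z)ᴴ)|` by `(2 Im z)⁻ⁿ`.
-/

open Matrix Metric Filter Topology ComplexConjugate
open scoped ComplexOrder

theorem star_mul_mul_sub_star_mul_mul_eq_star_sub_self {R : Type*} [Ring R] [StarRing R]
    {a b d : R} (hd : d * (b - star b) = 1) (hd' : (b - star b) * d = 1) :
    star (a - star b) * d * (a - star b) - star (a - b) * d * (a - b) = star a - a := by
  set t := b - star b
  set y := a - b
  have hx : a - star b = y + t := by simp only [y, t]; noncomm_ring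
  have hx' : star (a - star b) = star y - t := by
    simp only [y, t, star_sub, star_star]; noncomm_ring
  rw [hx', hx]
  calc (star y - t) * d * (y + t) - star y * d * y
      = star y * (d * t) - (t * d) * y - (t * d) * t := by noncomm_ring
    _ = star a - a := by rw [hd, hd']; simp only [y, t, star_sub]; noncomm_ring

namespace Matrix

variable {n : Type*}

noncomputable def imPart (A : Matrix n n ℂ) : Matrix n n ℂ := (2 * Complex.I)⁻¹ • (A - Aᴴ)

theorem sub_conjTranspose_eq_smul_imPart (A : Matrix n n ℂ) :
    A - Aᴴ = (2 * Complex.I) • imPart A := by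
  rw [imPart, smul_smul, mul_inv_cancel₀ (by simp), one_smul]

variable [Fintype n] [DecidableEq n]

theorem norm_det_le_one_of_posSemidef_one_sub {C : Matrix n n ℂ}
    (h : (1 - Cᴴ * C).PosSemidef) : ‖C.det‖ ≤ 1 := by
  have hH := posSemidef_conjTranspose_mul_self C
  have hle : ∀ i, hH.1.eigenvalues i ≤ 1 := fun i => by
    have hv := h.re_dotProduct_nonneg (hH.1.eigenvectorBasis i)
    have hunit : (star ⇑(hH.1.eigenvectorBasis i) ⬝ᵥ ⇑(hH.1.eigenvectorBasis i)) = 1 := by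
      rw [dotProduct_comm, ← EuclideanSpace.inner_eq_star_dotProduct,
        inner_self_eq_norm_sq_to_K, hH.1.eigenvectorBasis.orthonormal.1 i]
      simp
    rw [sub_mulVec, one_mulVec, dotProduct_sub, hunit, map_sub, ← hH.1.eigenvalues_eq] at hv
    simpa using hv
  have hsq : ‖C.det‖ ^ 2 = ∏ i, hH.1.eigenvalues i := by
    have : ((‖C.det‖ ^ 2 : ℝ) : ℂ) = (Cᴴ * C).det := by
      rw [det_mul, det_conjTranspose, Complex.star_def, ← Complex.normSq_eq_conj_mul_self,
        Complex.normSq_eq_norm_sq]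
    rw [hH.1.det_eq_prod_eigenvalues, ← RCLike.ofReal_prod] at this
    exact RCLike.ofReal_injective this
  refine (pow_le_one_iff_of_nonneg (norm_nonneg _) two_ne_zero).mp ?_
  exact hsq ▸ Finset.prod_le_one (fun i _ => hH.eigenvalues_nonneg i) fun i _ => hle i

theorem norm_det_le_of_posSemidef_conjTranspose_mul_self_sub {X Y : Matrix n n ℂ}
    (hX : IsUnit X.det) (h : (Xᴴ * X - Yᴴ * Y).PosSemidef) : ‖Y.det‖ ≤ ‖X.det‖ := by
  set C := Y * X⁻¹
  have hC : 1 - Cᴴ * C = (X⁻¹)ᴴ * (Xᴴ * X - Yᴴ * Y) * X⁻¹ := by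
    simp only [C, conjTranspose_mul, Matrix.mul_sub, Matrix.sub_mul, Matrix.mul_assoc]
    rw [mul_nonsing_inv _ hX, Matrix.mul_one, ← conjTranspose_mul,
      mul_nonsing_inv _ hX, conjTranspose_one]
  have hY : Y = C * X := by simp [C, Matrix.mul_assoc, nonsing_inv_mul _ hX]
  rw [hY, det_mul, norm_mul]
  exact mul_le_of_le_one_left (norm_nonneg _)
    (norm_det_le_one_of_posSemidef_one_sub (hC ▸ h.conjTranspose_mul_mul_same _))

open scoped MatrixOrder in
theorem norm_det_le_of_posSemidef_conjTranspose_mul_mul_sub {M X Y : Matrix n n ℂ} (hM : M.PosDef)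
    (hX : IsUnit X.det) (h : (Xᴴ * M * X - Yᴴ * M * Y).PosSemidef) : ‖Y.det‖ ≤ ‖X.det‖ := by
  obtain ⟨R, hR, rfl⟩ := CStarAlgebra.isStrictlyPositive_iff_eq_star_mul_self.mp
    hM.isStrictlyPositive
  have hRdet : IsUnit R.det := (isUnit_iff_isUnit_det R).mp hR
  have key := norm_det_le_of_posSemidef_conjTranspose_mul_self_sub (X := R * X) (Y := R * Y)
    (by rw [det_mul]; exact hRdet.mul hX)
    (by simpa [Matrix.mul_assoc, star_eq_conjTranspose] using h)
  rw [det_mul, det_mul, norm_mul, norm_mul] at key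
  exact le_of_mul_le_mul_left key (norm_pos_iff.mpr hRdet.ne_zero)

theorem conjTranspose_sub_mul_inv_imPart_mul_sub {A B : Matrix n n ℂ}
    (hB : IsUnit (imPart B).det) :
    (A - Bᴴ)ᴴ * (imPart B)⁻¹ * (A - Bᴴ) - (A - B)ᴴ * (imPart B)⁻¹ * (A - B) =
      (4 : ℂ) • imPart A := by
  have h2I : (2 * Complex.I : ℂ) ≠ 0 := by simp
  set d := (2 * Complex.I)⁻¹ • (imPart B)⁻¹
  have hd : d * (B - Bᴴ) = 1 := by
    rw [sub_conjTranspose_eq_smul_imPart, smul_mul_smul, inv_mul_cancel₀ h2I, one_smul,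
      nonsing_inv_mul _ hB]
  have hd' : (B - Bᴴ) * d = 1 := by
    rw [sub_conjTranspose_eq_smul_imPart, smul_mul_smul, mul_inv_cancel₀ h2I, one_smul,
      mul_nonsing_inv _ hB]
  have hM : (imPart B)⁻¹ = (2 * Complex.I) • d := by
    rw [smul_smul, mul_inv_cancel₀ h2I, one_smul]
  have key := star_mul_mul_sub_star_mul_mul_eq_star_sub_self (a := A) hd hd'
  simp only [star_eq_conjTranspose] at key
  rw [hM]
  simp only [mul_smul_comm, smul_mul_assoc, ← smul_sub, key]
  rw [← neg_sub, sub_conjTranspose_eq_smul_imPart, smul_neg, smul_smul, ← neg_smul]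
  congr 1
  linear_combination (-4 : ℂ) * Complex.I_sq

variable {A B : Matrix n n ℂ}

theorem isUnit_det_sub_conjTranspose (hA : (imPart A).PosDef) (hB : (imPart B).PosDef) :
    IsUnit (A - Bᴴ).det := by
  have hX : ((A - Bᴴ)ᴴ * (imPart B)⁻¹ * (A - Bᴴ)).PosDef := by
    rw [← sub_add_cancel ((A - Bᴴ)ᴴ * _ * _) ((A - B)ᴴ * (imPart B)⁻¹ * (A - B)),
      conjTranspose_sub_mul_inv_imPart_mul_sub hB.det_pos.ne'.isUnit]
    exact (hA.smul (by norm_num)).add_posSemidef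
      (hB.inv.posSemidef.conjTranspose_mul_mul_same _)
  have hdet := (isUnit_iff_isUnit_det _).mp hX.isUnit
  rw [det_mul, det_mul] at hdet
  exact isUnit_of_mul_isUnit_right hdet

theorem norm_det_sub_le_norm_det_sub_conjTranspose (hA : (imPart A).PosDef)
    (hB : (imPart B).PosDef) : ‖(A - B).det‖ ≤ ‖(A - Bᴴ).det‖ :=
  norm_det_le_of_posSemidef_conjTranspose_mul_mul_sub hB.inv
    (isUnit_det_sub_conjTranspose hA hB) <| by
    rw [conjTranspose_sub_mul_inv_imPart_mul_sub hB.det_pos.ne'.isUnit]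
    exact (hA.smul (by norm_num)).posSemidef

end Matrix

theorem DifferentiableOn.matrix_det {𝕜 ι : Type*} [NontriviallyNormedField 𝕜] [Fintype ι]
    [DecidableEq ι] {M : 𝕜 → Matrix ι ι 𝕜} {s : Set 𝕜}
    (h : ∀ i j, DifferentiableOn 𝕜 (M · i j) s) :
    DifferentiableOn 𝕜 (fun x => (M x).det) s := by
  simp only [det_apply']
  exact .fun_sum fun σ _ => (DifferentiableOn.fun_finsetProd fun i _ => h (σ i) i).const_mul _

theorem Complex.pow_mul_norm_le_of_norm_sub_pow_mul_le {E : Type*} [NormedAddCommGroup E]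
    [NormedSpace ℂ E] {f : ℂ → E} {c : ℂ} {R M : ℝ} (n : ℕ) (hR : 0 < R)
    (hf : DifferentiableOn ℂ f (ball c R)) (h : ∀ u ∈ ball c R, ‖u - c‖ ^ n * ‖f u‖ ≤ M) :
    R ^ n * ‖f c‖ ≤ M := by
  have hr : ∀ r ∈ Set.Ioo 0 R, r ^ n * ‖f c‖ ≤ M := fun r ⟨hr₀, hrR⟩ => by
    have hfr : DiffContOnCl ℂ f (ball c r) := hf.diffContOnCl_ball (closedBall_subset_ball hrR)
    rw [mul_comm, ← le_div_iff₀ (pow_pos hr₀ n)]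
    refine Complex.norm_le_of_forall_mem_frontier_norm_le isBounded_ball hfr (fun u hu => ?_)
      (subset_closure (mem_ball_self hr₀))
    rw [frontier_ball c hr₀.ne', mem_sphere_iff_norm] at hu
    rw [le_div_iff₀ (pow_pos hr₀ n), mul_comm, ← hu]
    exact h u (by rw [mem_ball_iff_norm, hu]; exact hrR)
  have hlim : Tendsto (fun r : ℝ => r ^ n * ‖f c‖) (𝓝[<] R) (𝓝 (R ^ n * ‖f c‖)) :=
    ((continuous_pow n).mul continuous_const).continuousWithinAt.tendsto
  exact le_of_tendsto hlim (eventually_of_mem (Ioo_mem_nhdsLT hR) hr)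

namespace Complex

noncomputable def diskToUpperHalfPlane (z u : ℂ) : ℂ := (z - conj z * u) / (1 - u)

@[simp] theorem diskToUpperHalfPlane_zero (z : ℂ) : diskToUpperHalfPlane z 0 = z := by
  simp [diskToUpperHalfPlane]

theorem diskToUpperHalfPlane_sub {z u : ℂ} (hu : u ≠ 1) :
    diskToUpperHalfPlane z u - z = u * ((z - conj z) / (1 - u)) := by
  have : 1 - u ≠ 0 := sub_ne_zero.mpr hu.symm
  rw [diskToUpperHalfPlane]
  field_simp
  ring

theorem im_diskToUpperHalfPlane (z u : ℂ) :
    (diskToUpperHalfPlane z u).im = z.im * (1 - normSq u) / normSq (1 - u) := by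
  rw [diskToUpperHalfPlane, div_im, div_sub_div_same]
  congr 1
  simp only [normSq_apply, sub_re, sub_im, mul_re, mul_im, conj_re, conj_im, one_re, one_im]
  ring

theorem im_diskToUpperHalfPlane_pos {z u : ℂ} (hz : 0 < z.im) (hu : u ∈ ball (0 : ℂ) 1) :
    0 < (diskToUpperHalfPlane z u).im := by
  have hu1 : ‖u‖ < 1 := mem_ball_zero_iff.mp hu
  have hne : 1 - u ≠ 0 := sub_ne_zero.mpr (by rintro rfl; simp at hu1)
  rw [im_diskToUpperHalfPlane, normSq_eq_norm_sq]
  have : 0 < 1 - ‖u‖ ^ 2 := by nlinarith [norm_nonneg u]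
  exact div_pos (mul_pos hz this) (normSq_pos.mpr hne)

theorem differentiableOn_diskToUpperHalfPlane (z : ℂ) :
    DifferentiableOn ℂ (diskToUpperHalfPlane z) (ball 0 1) := by
  refine .div (by fun_prop) (by fun_prop) fun u hu => sub_ne_zero.mpr ?_
  rintro rfl
  simp at hu

theorem two_mul_im_pow_mul_norm_le_of_norm_sub_pow_mul_le {E : Type*} [NormedAddCommGroup E]
    [NormedSpace ℂ E] {f : ℂ → E} {z : ℂ} {M : ℝ} (n : ℕ) (hz : 0 < z.im)
    (hf : DifferentiableOn ℂ f {w | 0 < w.im})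
    (h : ∀ w, 0 < w.im → ‖w - z‖ ^ n * ‖f w‖ ≤ M) :
    (2 * z.im) ^ n * ‖f z‖ ≤ M := by
  have hne : ∀ u ∈ ball (0 : ℂ) 1, u ≠ 1 := by
    rintro u hu rfl
    simp at hu
  have hg : DifferentiableOn ℂ
      (fun u => ((z - conj z) / (1 - u)) ^ n • f (diskToUpperHalfPlane z u)) (ball 0 1) := by
    refine .smul (.pow (.div (by fun_prop) (by fun_prop) fun u hu =>
      sub_ne_zero.mpr (hne u hu).symm) n) ?_
    exact hf.comp (differentiableOn_diskToUpperHalfPlane z) fun u hu =>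
      im_diskToUpperHalfPlane_pos hz hu
  have := pow_mul_norm_le_of_norm_sub_pow_mul_le n one_pos hg fun u hu => by
    rw [sub_zero, norm_smul, norm_pow, ← mul_assoc, ← mul_pow, ← norm_mul,
      ← diskToUpperHalfPlane_sub (hne u hu)]
    exact h _ (im_diskToUpperHalfPlane_pos hz hu)
  have hc : ‖z - conj z‖ = 2 * z.im := by
    rw [sub_conj, norm_mul, norm_I, mul_one, norm_real, Real.norm_of_nonneg (by positivity)]
  simpa [norm_smul, hc] using this

end Complex

theorem Matrix.det_sub_eq_sub_pow_mul_det_dslope {ι : Type*} [Fintype ι] [DecidableEq ι]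
    (Φ : ℂ → Matrix ι ι ℂ) (z w : ℂ) :
    (Φ w - Φ z).det = (w - z) ^ Fintype.card ι * (of fun i j => dslope (Φ · i j) z w).det := by
  rw [← det_smul]
  congr 1
  ext i j
  exact (sub_smul_dslope (Φ · i j) z w).symm

theorem two_mul_im_pow_mul_norm_det_deriv_le {ι : Type*} [Fintype ι] [DecidableEq ι]
    {Φ Φ' : ℂ → Matrix ι ι ℂ}
    (hderiv : ∀ z : ℂ, 0 < z.im → ∀ i j, HasDerivAt (Φ · i j) (Φ' z i j) z)
    (hpos : ∀ z : ℂ, 0 < z.im → (imPart (Φ z)).PosDef) {z : ℂ} (hz : 0 < z.im) :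
    (2 * z.im) ^ Fintype.card ι * ‖(Φ' z).det‖ ≤ ‖(Φ z - (Φ z)ᴴ).det‖ := by
  have hopen : IsOpen {w : ℂ | 0 < w.im} := isOpen_lt continuous_const Complex.continuous_im
  have hΦ : ∀ i j, DifferentiableOn ℂ (Φ · i j) {w | 0 < w.im} := fun i j w hw =>
    (hderiv w hw i j).differentiableAt.differentiableWithinAt
  have hden : ∀ w, 0 < w.im → (Φ w - (Φ z)ᴴ).det ≠ 0 := fun w hw =>
    (isUnit_det_sub_conjTranspose (hpos w hw) (hpos z hz)).ne_zero
  have hquot : DifferentiableOn ℂ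
      (fun w => (of fun i j => dslope (Φ · i j) z w).det / (Φ w - (Φ z)ᴴ).det)
      {w | 0 < w.im} :=
    .div (.matrix_det fun i j =>
        (Complex.differentiableOn_dslope (hopen.mem_nhds hz)).mpr (hΦ i j))
      (.matrix_det fun i j => (hΦ i j).sub_const _) hden
  have key := Complex.two_mul_im_pow_mul_norm_le_of_norm_sub_pow_mul_le (M := 1) _ hz hquot
    fun w hw => by
      rw [← norm_pow, ← norm_mul, ← mul_div_assoc, ← det_sub_eq_sub_pow_mul_det_dslope, norm_div,
        div_le_one (norm_pos_iff.mpr (hden w hw))]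
      exact norm_det_sub_le_norm_det_sub_conjTranspose (hpos w hw) (hpos z hz)
  have hdslope : (of fun i j => dslope (Φ · i j) z z) = Φ' z := by
    ext i j
    exact (dslope_same _ _).trans (hderiv z hz i j).deriv
  rwa [hdslope, norm_div, mul_div_assoc', div_le_one (norm_pos_iff.mpr (hden z hz))] at key

theorem matrix_herglotz_det_deriv_bound_general
    (n : ℕ)
    (Φ Φ' : ℂ → Matrix (Fin n) (Fin n) ℂ)
    (hderiv : ∀ z : ℂ, 0 < z.im → ∀ i j : Fin n,
      HasDerivAt (fun w => Φ w i j) (Φ' z i j) z)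
    (hpos : ∀ z : ℂ, 0 < z.im →
      ((2 * Complex.I)⁻¹ • (Φ z - (Φ z)ᴴ)).PosDef) :
    ∀ z : ℂ, 0 < z.im →
      ‖(Φ' z).det‖ * z.im ^ n ≤ (((2 * Complex.I)⁻¹ • (Φ z - (Φ z)ᴴ)).det).re := by
  intro z hz
  have hB : (imPart (Φ z)).PosDef := hpos z hz
  have key := two_mul_im_pow_mul_norm_det_deriv_le hderiv hpos hz
  rw [Fintype.card_fin, sub_conjTranspose_eq_smul_imPart, det_smul, Fintype.card_fin, norm_mul,
    norm_pow, ← Complex.re_eq_norm.mpr hB.det_pos.le] at key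
  have h2I : ‖2 * Complex.I‖ = 2 := by simp
  rw [h2I, mul_pow, mul_assoc] at key
  rw [mul_comm]
  exact le_of_mul_le_mul_left key (by positivity)

/-- Matrix-valued Schwarz–Pick lemma (determinant form): if `Φ` is a holomorphic
symmetric matrix-valued Herglotz function on the upper half-plane, with
`B z = (Φ z - (Φ z)ᴴ) / (2i)` positive definite, then
`|det Φ'(z)| ≤ det (B z) / (Im z)^n`. -/
theorem matrix_herglotz_det_deriv_bound
    (n : ℕ) (hn : 1 ≤ n)
    (Φ Φ' : ℂ → Matrix (Fin n) (Fin n) ℂ)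
    (hderiv : ∀ z : ℂ, 0 < z.im → ∀ i j : Fin n,
      HasDerivAt (fun w => Φ w i j) (Φ' z i j) z)
    (hsym : ∀ z : ℂ, 0 < z.im → (Φ z)ᵀ = Φ z)
    (hpos : ∀ z : ℂ, 0 < z.im →
      ((2 * Complex.I)⁻¹ • (Φ z - (Φ z)ᴴ)).PosDef) :
    ∀ z : ℂ, 0 < z.im →
      ‖(Φ' z).det‖ * z.im ^ n ≤ (((2 * Complex.I)⁻¹ • (Φ z - (Φ z)ᴴ)).det).re :=
  matrix_herglotz_det_deriv_bound_general n Φ Φ' hderiv hpos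
end

section
/- Let n ≥ 1, let B be an n×n Hermitian positive definite complex matrix, let M be an arbitrary n×n complex matrix, and let c ≥ 0 be a real number. If |v* M v| ≤ c · (v* B v) for every vector v ∈ ℂⁿ (where v* B v is a nonnegative real number since B is positive definite), then |det(M)| ≤ cⁿ · det(B), where det(B) is a positive real number. -/
/-!
Congruence by `T = B^{-1/2}` turns `B` into the identity and `M` into `N = Tᴴ M T`, so that
`|w* N w| ≤ c ‖w‖²`. Testing this on an eigenvector shows that every eigenvalue of `N` has modulus
at most `c`, hence `|det N| ≤ cⁿ`, and `det M = det B · det N`.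
-/

open Matrix
open scoped ComplexOrder

namespace Matrix

variable {ι : Type*} [Fintype ι]

theorem star_dotProduct_conjTranspose_mul_mul_mulVec {R : Type*} [CommSemiring R] [StarRing R]
    (T M : Matrix ι ι R) (w : ι → R) :
    star w ⬝ᵥ (Tᴴ * M * T) *ᵥ w = star (T *ᵥ w) ⬝ᵥ M *ᵥ (T *ᵥ w) := by
  simp only [star_mulVec, dotProduct_mulVec, vecMul_vecMul]

theorem det_mul_det_conjTranspose_mul_mul {R : Type*} [CommRing R] [StarRing R] [DecidableEq ι]
    {B T : Matrix ι ι R} (h : Tᴴ * B * T = 1) (M : Matrix ι ι R) :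
    B.det * (Tᴴ * M * T).det = M.det := by
  have hdet := congrArg det h
  simp only [det_mul, det_one] at hdet ⊢
  linear_combination M.det * hdet

theorem PosDef.exists_conjTranspose_mul_mul_eq_one {𝕜 : Type*} [RCLike 𝕜] [DecidableEq ι]
    {B : Matrix ι ι 𝕜} (hB : B.PosDef) : ∃ T : Matrix ι ι 𝕜, Tᴴ * B * T = 1 := by
  open scoped MatrixOrder in
  obtain ⟨S, hS, hSS⟩ : ∃ S : Matrix ι ι 𝕜, S.IsHermitian ∧ S * S = B :=
    ⟨CFC.sqrt B, (CFC.sqrt_nonneg B).posSemidef.1, CFC.sqrt_mul_sqrt_self B hB.posSemidef.nonneg⟩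
  have hSunit : IsUnit S.det := by
    rw [isUnit_iff_ne_zero]
    intro h
    exact hB.det_pos.ne' (by rw [← hSS, det_mul, h, zero_mul])
  refine ⟨S⁻¹, ?_⟩
  rw [hS.inv.eq, ← hSS, ← Matrix.mul_assoc, nonsing_inv_mul S hSunit, Matrix.one_mul,
    mul_nonsing_inv S hSunit]

theorem norm_le_of_mulVec_eq_smul {𝕜 : Type*} [RCLike 𝕜] {N : Matrix ι ι 𝕜} {c : ℝ}
    (hN : ∀ w, ‖star w ⬝ᵥ N *ᵥ w‖ ≤ c * RCLike.re (star w ⬝ᵥ w))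
    {μ : 𝕜} {w : ι → 𝕜} (hw : w ≠ 0) (hNw : N *ᵥ w = μ • w) : ‖μ‖ ≤ c := by
  classical
  have hpos : 0 < RCLike.re (star w ⬝ᵥ w) := by
    simpa only [one_mulVec] using PosDef.one.re_dotProduct_pos hw
  refine le_of_mul_le_mul_right ?_ hpos
  calc ‖μ‖ * RCLike.re (star w ⬝ᵥ w) ≤ ‖μ‖ * ‖star w ⬝ᵥ w‖ := by
        gcongr; exact RCLike.re_le_norm _
    _ = ‖star w ⬝ᵥ N *ᵥ w‖ := by rw [hNw, dotProduct_smul, smul_eq_mul, norm_mul]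
    _ ≤ c * RCLike.re (star w ⬝ᵥ w) := hN w

theorem exists_mulVec_eq_smul_of_isRoot_charpoly {K : Type*} [Field K] [DecidableEq ι]
    {N : Matrix ι ι K} {μ : K} (hμ : N.charpoly.IsRoot μ) :
    ∃ w ≠ 0, N *ᵥ w = μ • w := by
  rw [← charpoly_toLin', ← Module.End.hasEigenvalue_iff_isRoot_charpoly] at hμ
  obtain ⟨w, hw⟩ := hμ.exists_hasEigenvector
  exact ⟨w, hw.2, hw.apply_eq_smul⟩

theorem norm_det_le_pow_card_of_isRoot_charpoly {K : Type*} [NormedField K] [IsAlgClosed K]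
    [DecidableEq ι] {N : Matrix ι ι K} {c : ℝ} (h : ∀ μ, N.charpoly.IsRoot μ → ‖μ‖ ≤ c) :
    ‖N.det‖ ≤ c ^ Fintype.card ι := by
  rw [det_eq_prod_roots_charpoly, ← charpoly_natDegree_eq_dim N,
    ← IsAlgClosed.card_roots_eq_natDegree]
  refine (map_multiset_prod (normHom : K →*₀ ℝ) _).trans_le ?_
  exact Multiset.prod_map_le_pow_card (fun μ _ => norm_nonneg μ)
    fun μ hμ => h μ (Polynomial.isRoot_of_mem_roots hμ)

end Matrix

theorem det_bound_of_quadratic_form_bound_general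
    (n : ℕ)
    (B M : Matrix (Fin n) (Fin n) ℂ) (hB : B.PosDef)
    (c : ℝ)
    (hbound : ∀ v : Fin n → ℂ,
      ‖star v ⬝ᵥ M.mulVec v‖ ≤ c * (star v ⬝ᵥ B.mulVec v).re) :
    ‖M.det‖ ≤ c ^ n * B.det.re := by
  obtain ⟨T, hT⟩ := hB.exists_conjTranspose_mul_mul_eq_one
  have hN : ∀ w, ‖star w ⬝ᵥ (Tᴴ * M * T) *ᵥ w‖ ≤ c * (star w ⬝ᵥ w).re := fun w => by
    simpa only [← star_dotProduct_conjTranspose_mul_mul_mulVec, hT, one_mulVec] using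
      hbound (T *ᵥ w)
  have hdetN : ‖(Tᴴ * M * T).det‖ ≤ c ^ n := by
    simpa only [Fintype.card_fin] using norm_det_le_pow_card_of_isRoot_charpoly fun μ hμ =>
      let ⟨_, hw, hNw⟩ := exists_mulVec_eq_smul_of_isRoot_charpoly hμ
      norm_le_of_mulVec_eq_smul hN hw hNw
  have hdetB : ‖B.det‖ = B.det.re := (Complex.re_eq_norm.mpr hB.det_pos.le).symm
  rw [← det_mul_det_conjTranspose_mul_mul hT M, norm_mul, hdetB, mul_comm]
  exact mul_le_mul_of_nonneg_right hdetN (hdetB ▸ norm_nonneg _)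

/-- If `B` is Hermitian positive definite and `|v* M v| ≤ c · (v* B v)` for all
vectors `v`, then `|det M| ≤ cⁿ · det B`. -/
theorem det_bound_of_quadratic_form_bound
    (n : ℕ) (hn : 1 ≤ n)
    (B M : Matrix (Fin n) (Fin n) ℂ) (hB : B.PosDef)
    (c : ℝ) (hc : 0 ≤ c)
    (hbound : ∀ v : Fin n → ℂ,
      ‖star v ⬝ᵥ M.mulVec v‖ ≤ c * (star v ⬝ᵥ B.mulVec v).re) :
    ‖M.det‖ ≤ c ^ n * B.det.re :=
  det_bound_of_quadratic_form_bound_general n B M hB c hbound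
end

section
/- Let d > 0 be a real number, let k be an integer, let ε = 1 or ε = −1, and set z₀ := k·π + ε·i·arsinh(1/√d) ∈ ℂ. Then d·z₀·sin(z₀) − cos(z₀) ≠ 0, the quantity 1 + d·(sin z₀)² equals 0, and the function f(w) := sin(w)/(d·w·sin(w) − cos(w)) is complex differentiable at z₀ with f'(z₀) = 0. -/
/-!
By the quotient rule and `sin² + cos² = 1`, the derivative of `sin w / (d w sin w - cos w)` is
`-(1 + d sin² w) / (d w sin w - cos w)²`. At `z = kπ + bi` one has `sin z = ± i sinh b` and
`cos z = ± cosh b`, so `sin² z = -sinh² b`, which is `-1/d` for `b = ± arsinh (1/√d)`. The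
denominator does not vanish there: up to the sign `(-1)^k` its real part is
`-d b sinh b - cosh b ≤ -1`.
-/

open Complex
open scoped Real

theorem hasDerivAt_sin_div_mul_mul_sin_sub_cos {d w : ℂ} (hw : d * w * sin w - cos w ≠ 0) :
    HasDerivAt (fun w => sin w / (d * w * sin w - cos w))
      (-(1 + d * sin w ^ 2) / (d * w * sin w - cos w) ^ 2) w := by
  have hden : HasDerivAt (fun w => d * w * sin w - cos w)
      (d * sin w + d * w * cos w + sin w) w :=
    ((((hasDerivAt_id w).const_mul d).mul (hasDerivAt_sin w)).sub (hasDerivAt_cos w)).congr_deriv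
      (by simp only [id]; ring)
  refine ((hasDerivAt_sin w).div hden hw).congr_deriv ?_
  congr 1
  linear_combination -sin_sq_add_cos_sq w

theorem sin_int_mul_pi_add_mul_I (k : ℤ) (b : ℂ) :
    sin (k * π + b * I) = (k.negOnePow : ℤ) * (sinh b * I) := by
  rw [add_comm, sin_antiperiodic.add_int_mul_eq, sin_mul_I]

theorem cos_int_mul_pi_add_mul_I (k : ℤ) (b : ℂ) :
    cos (k * π + b * I) = (k.negOnePow : ℤ) * cosh b := by
  rw [add_comm, cos_antiperiodic.add_int_mul_eq, cos_mul_I]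

theorem sin_int_mul_pi_add_mul_I_sq (k : ℤ) (b : ℂ) :
    sin (k * π + b * I) ^ 2 = -sinh b ^ 2 := by
  have hsign : ((k.negOnePow : ℤ) : ℂ) ^ 2 = 1 := by
    rw [← Int.cast_pow, ← Units.val_pow_eq_pow_val, Int.units_sq, Units.val_one, Int.cast_one]
  rw [sin_int_mul_pi_add_mul_I]
  linear_combination (sinh b ^ 2 * I ^ 2) * hsign + sinh b ^ 2 * I_sq

theorem Real.mul_sinh_nonneg (b : ℝ) : 0 ≤ b * Real.sinh b := by
  rcases le_total 0 b with hb | hb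
  · exact mul_nonneg hb (Real.sinh_nonneg_iff.mpr hb)
  · exact mul_nonneg_of_nonpos_of_nonpos hb (Real.sinh_nonpos_iff.mpr hb)

theorem mul_mul_sin_sub_cos_int_mul_pi_add_mul_I_ne_zero {d : ℝ} (hd : 0 ≤ d) (k : ℤ) (b : ℝ) :
    (d : ℂ) * (k * π + b * I) * sin (k * π + b * I) - cos (k * π + b * I) ≠ 0 := by
  set g : ℂ := d * (k * π + b * I) * (sinh b * I) - cosh b
  have hg_re : g.re = -(d * b * Real.sinh b) - Real.cosh b := by
    simp [g, ← ofReal_sinh, ← ofReal_cosh]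
  have hg : g ≠ 0 := fun h => by
    have := congrArg re h
    rw [hg_re, zero_re] at this
    linarith [Real.one_le_cosh b, mul_nonneg hd (Real.mul_sinh_nonneg b)]
  have hsign : ((k.negOnePow : ℤ) : ℂ) ≠ 0 := Int.cast_ne_zero.mpr k.negOnePow.ne_zero
  rw [sin_int_mul_pi_add_mul_I, cos_int_mul_pi_add_mul_I,
    show ∀ s : ℂ, d * (k * π + b * I) * (s * (sinh b * I)) - s * cosh b = s * g from
      fun s => by ring]
  exact mul_ne_zero hsign hg

/-- The zeros of the derivative of Szőke's transition function: at the points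
`z₀ = kπ ± i·arsinh(1/√d)` (for `d > 0`), the denominator `d·z₀·sin z₀ − cos z₀`
is nonzero, `1 + d·sin²z₀ = 0`, and `f(w) = sin w / (d·w·sin w − cos w)` is
complex differentiable at `z₀` with derivative `0`. -/
theorem szoke_transition_deriv_zero (d : ℝ) (hd : 0 < d) (k : ℤ) (ε : ℝ)
    (hε : ε = 1 ∨ ε = -1) :
    let z₀ : ℂ := (k : ℂ) * (Real.pi : ℂ) +
      (ε : ℂ) * Complex.I * (Real.arsinh (1 / Real.sqrt d) : ℂ)
    (d : ℂ) * z₀ * Complex.sin z₀ - Complex.cos z₀ ≠ 0 ∧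
    1 + (d : ℂ) * Complex.sin z₀ ^ 2 = 0 ∧
    HasDerivAt (fun w : ℂ => Complex.sin w / ((d : ℂ) * w * Complex.sin w - Complex.cos w))
      0 z₀ := by
  intro z₀
  set b : ℝ := ε * Real.arsinh (1 / Real.sqrt d)
  have hz₀ : z₀ = k * π + b * I := by
    simp only [z₀, b]
    push_cast
    ring
  have hsinh : Real.sinh b ^ 2 = 1 / d := by
    rcases hε with rfl | rfl <;> simp [b, Real.sinh_neg, Real.sq_sqrt hd.le]
  have hcrit : 1 + (d : ℂ) * sin z₀ ^ 2 = 0 := by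
    have hd' : (d : ℂ) ≠ 0 := ofReal_ne_zero.mpr hd.ne'
    rw [hz₀, sin_int_mul_pi_add_mul_I_sq, ← ofReal_sinh, ← ofReal_pow, hsinh, one_div, ofReal_inv,
      mul_neg, mul_inv_cancel₀ hd', add_neg_cancel]
  have hden : (d : ℂ) * z₀ * sin z₀ - cos z₀ ≠ 0 := by
    rw [hz₀]
    exact mul_mul_sin_sub_cos_int_mul_pi_add_mul_I_ne_zero hd.le k b
  refine ⟨hden, hcrit, ?_⟩
  simpa [hcrit] using hasDerivAt_sin_div_mul_mul_sin_sub_cos hden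
end
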